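/- Let W_1 ≤ W_2 ≤ ⋯ ≤ W_n be positive reals. Call an index k ∈ [n] good if for every j ∈ [k], (k−3)·W_j ≤ Σ_{i∈[k], i≠j} W_i, and bad otherwise. If k ∈ [n−1] is bad, then k+1 is also bad. (Monotonicity of badness, used in the rounding procedure of Section 3.1.2.) -/
import Mathlib


/-- An index `k` (number of hypotheses considered, indices `0, …, k−1`) is *good*
for the weights `W` if `(k−3)·W j ≤ Σ_{i < k, i ≠ j} W i` for every `j < k`. -/
def IsGoodIndex (W : ℕ → ℝ) (k : ℕ) : Prop :=
  ∀ j ∈ Finset.range k, ((k : ℝ) - 3) * W j ≤ ∑ i ∈ (Finset.range k).erase j, W i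

/-- **Monotonicity of badness** (used in the rounding procedure of Section 3.1.2).
For positive reals `W 0 ≤ W 1 ≤ ⋯ ≤ W (n−1)`, if `k < n` is bad then `k+1` is also bad. -/
theorem bad_index_monotone (n : ℕ) (W : ℕ → ℝ)
    (hpos : ∀ i, i < n → 0 < W i)
    (hmono : ∀ i j, i ≤ j → j < n → W i ≤ W j)
    (k : ℕ) (hk1 : 1 ≤ k) (hkn : k < n)
    (hbad : ¬ IsGoodIndex W k) :
    ¬ IsGoodIndex W (k + 1) := by
  unfold IsGoodIndex at *
  push_neg at hbad
  obtain ⟨j, hj, hlt⟩ := hbad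
  rw [Finset.mem_range] at hj
  have hjn : j < n := lt_trans hj hkn
  have hWj : 0 < W j := hpos j hjn
  -- sum over erase is nonneg
  have hsum_nonneg : 0 ≤ ∑ i ∈ (Finset.range k).erase j, W i := by
    apply Finset.sum_nonneg
    intro i hi
    have := Finset.mem_of_mem_erase hi
    rw [Finset.mem_range] at this
    exact le_of_lt (hpos i (lt_trans this hkn))
  have hk3 : (3 : ℝ) < (k : ℝ) := by
    by_contra h
    push_neg at h
    have : ((k : ℝ) - 3) * W j ≤ 0 :=
      mul_nonpos_of_nonpos_of_nonneg (by linarith) (le_of_lt hWj)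
    linarith
  -- rewrite erased sum
  have herase : ∑ i ∈ (Finset.range k).erase j, W i
      = (∑ i ∈ Finset.range k, W i) - W j :=
    Finset.sum_erase_eq_sub (by simpa using hj)
  rw [herase] at hlt
  -- so (k-2) W j > S_k
  have hmain : (∑ i ∈ Finset.range k, W i) < ((k : ℝ) - 2) * W j := by nlinarith
  push_neg
  refine ⟨k, Finset.mem_range.mpr (Nat.lt_succ_self k), ?_⟩
  have herase2 : (Finset.range (k + 1)).erase k = Finset.range k := by
    rw [Finset.range_add_one, Finset.erase_insert (by simp)]
  rw [herase2]
  have hWjk : W j ≤ W k := hmono j k (le_of_lt hj) hkn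
  have : ((k : ℝ) - 2) * W j ≤ ((k : ℝ) - 2) * W k :=
    mul_le_mul_of_nonneg_left hWjk (by linarith)
  push_cast
  nlinarith
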